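/- arXiv:1706.00190 — 2 statements merged into one kernel-verified Lean document; each statement's English description precedes it below -/
import Mathlib

section
/- Let 𝒟 be a dyadic grid on ℝⁿ, let α ∈ (0,1], γ = α/(2(2n+α)), and fix an integer r ≥ 1. Let I, J ∈ 𝒟 and let K ∈ 𝒟 be good, with ℓ(K) ≤ ℓ(I) = 2ℓ(J) and max(d(K,I), d(K,J)) > ℓ(K)^γ ℓ(J)^{1−γ}. Then there exists a cube Q ∈ 𝒟 such that I ∪ J ∪ K ⊂ Q and max(d(K,I), d(K,J)) ≥ c ℓ(K)^γ ℓ(Q)^{1−γ}, where c = c(n,r,γ) > 0. -/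
open MeasureTheory Set
open scoped ENNReal NNReal Classical

noncomputable section

namespace Bilinear

/-- Points of `ℝⁿ`, equipped with the `ℓ^∞` (sup) metric. -/
abbrev E (n : ℕ) : Type := Fin n → ℝ

/-- An axis-parallel cube in `ℝⁿ`, described by its lower corner and its side length. -/
structure Cube (n : ℕ) where
  corner : Fin n → ℝ
  side : ℝ
  side_pos : 0 < side

namespace Cube

variable {n : ℕ}

/-- The (half-open) cube as a subset of `ℝⁿ`. -/
def set (Q : Cube n) : Set (E n) :=
  {x | ∀ i, Q.corner i ≤ x i ∧ x i < Q.corner i + Q.side}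

/-- The closed cube as a subset of `ℝⁿ`. -/
def clSet (Q : Cube n) : Set (E n) :=
  {x | ∀ i, Q.corner i ≤ x i ∧ x i ≤ Q.corner i + Q.side}

/-- The volume `|Q| = ℓ(Q)ⁿ` of a cube. -/
def vol (Q : Cube n) : ℝ := Q.side ^ n

/-- The center of a cube. -/
def center (Q : Cube n) : E n := fun i => Q.corner i + Q.side / 2

/-- The concentric dilate `cQ` of a cube (defined for `c ≥ 1`; junk otherwise). -/
def dilate (Q : Cube n) (c : ℝ) : Cube n where
  corner := fun i => Q.corner i + Q.side / 2 - max c 1 * Q.side / 2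
  side := max c 1 * Q.side
  side_pos := mul_pos (lt_of_lt_of_le one_pos (le_max_right c 1)) Q.side_pos

end Cube

/-- The (`ℓ^∞`) distance between two sets of `ℝⁿ`. -/
def setDist {n : ℕ} (s t : Set (E n)) : ℝ := sInf (Set.image2 dist s t)

/-- The (`ℓ^∞`) distance between two cubes. -/
def cubeDist {n : ℕ} (Q R : Cube n) : ℝ := setDist Q.clSet R.clSet

/-- The indicator function `1_Q` of a cube, as a complex-valued function. -/
def indC {n : ℕ} (Q : Cube n) : E n → ℂ := fun x => if x ∈ Q.set then 1 else 0

/-- The average `⟨|f|⟩_Q` of `|f|` over a cube. -/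
def avgAbs {n : ℕ} (Q : Cube n) (f : E n → ℂ) : ℝ := Q.vol⁻¹ * ∫ x in Q.set, ‖f x‖

/-- The average `⟨f⟩_Q` of `f` over a cube. -/
def avg {n : ℕ} (Q : Cube n) (f : E n → ℂ) : ℂ := (Q.vol : ℂ)⁻¹ * ∫ x in Q.set, f x

/-- The `L^p` norm (`p` a real exponent) of `f : ℝⁿ → ℂ`. -/
def lpNorm {n : ℕ} (f : E n → ℂ) (p : ℝ) : ℝ := (eLpNorm f (ENNReal.ofReal p) volume).toReal

/-- `f` is bounded, measurable and compactly supported. -/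
def BddCompactSupp {n : ℕ} (f : E n → ℂ) : Prop :=
  Measurable f ∧ HasCompactSupport f ∧ ∃ M : ℝ, ∀ x, ‖f x‖ ≤ M

/-- The pairing `⟨f, g⟩ = ∫ f g`. -/
def pairing {n : ℕ} (f g : E n → ℂ) : ℂ := ∫ x, f x * g x

/-! ### Random dyadic grids -/

/-- The translation `Σ_{j : 2^{-j} < 2^{-k}} 2^{-j} ω^j` of the grid of scale `2^{-k}`. -/
def gridShift {n : ℕ} (ω : ℤ → Fin n → Bool) (k : ℤ) (i : Fin n) : ℝ :=
  ∑' j : {j : ℤ // k < j}, (2 : ℝ) ^ (-(j.1)) * (if ω j.1 i then 1 else 0)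

/-- The shifted dyadic grid `𝒟_ω = {I + ω : I ∈ 𝒟₀}`. -/
def dyadicGrid {n : ℕ} (ω : ℤ → Fin n → Bool) : Set (Cube n) :=
  {Q | ∃ (k : ℤ) (m : Fin n → ℤ), Q.side = (2 : ℝ) ^ (-k) ∧
    ∀ i, Q.corner i = (m i : ℝ) * (2 : ℝ) ^ (-k) + gridShift ω k i}

/-- A dyadic grid is a translate-type grid `𝒟_ω` of the standard grid. -/
def IsDyadicGrid {n : ℕ} (𝒟 : Set (Cube n)) : Prop := ∃ ω, 𝒟 = dyadicGrid ω

/-- A grid has no quadrants if every strictly increasing chain of cubes exhausts `ℝⁿ`;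
equivalently, every cube of the grid and every point are contained in a common bigger
grid cube. -/
def NoQuadrants {n : ℕ} (𝒟 : Set (Cube n)) : Prop :=
  ∀ Q ∈ 𝒟, ∀ x : E n, ∃ R ∈ 𝒟, Q.set ⊆ R.set ∧ x ∈ R.set

/-- A cube `I` of a grid `𝒟` is good (with parameters `r, γ`) if for every `J ∈ 𝒟` with
`ℓ(J) ≥ 2^r ℓ(I)` one has `d(I, ∂J) > ℓ(I)^γ ℓ(J)^(1-γ)`. -/
def IsGood {n : ℕ} (𝒟 : Set (Cube n)) (r : ℕ) (γ : ℝ) (I : Cube n) : Prop :=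
  ∀ J ∈ 𝒟, (2 : ℝ) ^ r * I.side ≤ J.side →
    I.side ^ γ * J.side ^ (1 - γ) < setDist I.clSet (frontier J.set)

/-! ### Haar functions -/

/-- One-dimensional Haar functions on the interval `[a, a+l)`:
noncancellative (`e = false`) and cancellative (`e = true`). -/
def haar1 (a l : ℝ) (e : Bool) (t : ℝ) : ℝ :=
  if a ≤ t ∧ t < a + l then
    if e then (if t < a + l / 2 then l ^ (-(1 : ℝ) / 2) else -(l ^ (-(1 : ℝ) / 2)))
    else l ^ (-(1 : ℝ) / 2)
  else 0

/-- The Haar function `h_Q^η` of a cube `Q ⊂ ℝⁿ`. It is cancellative iff `η ≠ 0`. -/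
def haar {n : ℕ} (Q : Cube n) (η : Fin n → Bool) : E n → ℝ :=
  fun x => ∏ i, haar1 (Q.corner i) Q.side (η i) (x i)

/-- The pairing `⟨f, h_Q^η⟩`. -/
def haarPairing {n : ℕ} (f : E n → ℂ) (Q : Cube n) (η : Fin n → Bool) : ℂ :=
  ∫ x, f x * (haar Q η x : ℂ)

/-! ### Bilinear Calderón–Zygmund kernels and truncated operators -/


/-- `K` is a (measurable) standard bilinear Calderón–Zygmund kernel on `ℝⁿ` with Hölder
exponent `α` and constant `C`: size bound and Hölder bounds in each of the three
variables, away from the diagonal `Δ = {x = y = z}`. -/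
def CZBounds (n : ℕ) (α : ℝ) (K : E n → E n → E n → ℂ) (C : ℝ) : Prop :=
  Measurable (fun p : E n × E n × E n => K p.1 p.2.1 p.2.2) ∧
  (∀ x y z : E n, ¬(x = y ∧ y = z) →
    ‖K x y z‖ ≤ C / (dist x y + dist x z) ^ (2 * n)) ∧
  (∀ x x' y z : E n, ¬(x = y ∧ y = z) → ¬(x' = y ∧ y = z) →
    dist x x' ≤ max (dist x y) (dist x z) / 2 →
    ‖K x y z - K x' y z‖ ≤ C * dist x x' ^ α / (dist x y + dist x z) ^ (2 * (n : ℝ) + α)) ∧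
  (∀ x y y' z : E n, ¬(x = y ∧ y = z) → ¬(x = y' ∧ y' = z) →
    dist y y' ≤ max (dist x y) (dist x z) / 2 →
    ‖K x y z - K x y' z‖ ≤ C * dist y y' ^ α / (dist x y + dist x z) ^ (2 * (n : ℝ) + α)) ∧
  (∀ x y z z' : E n, ¬(x = y ∧ y = z) → ¬(x = y ∧ y = z') →
    dist z z' ≤ max (dist x y) (dist x z) / 2 →
    ‖K x y z - K x y z'‖ ≤ C * dist z z' ^ α / (dist x y + dist x z) ^ (2 * (n : ℝ) + α))

/-- The truncated bilinear singular integral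
`T_ε(f,g)(x) = ∬_{max(|x-y|,|x-z|) > ε} K(x,y,z) f(y) g(z) dy dz`. -/
def truncT {n : ℕ} (K : E n → E n → E n → ℂ) (ε : ℝ) (f g : E n → ℂ) (x : E n) : ℂ :=
  ∫ y, ∫ z, if ε < max (dist x y) (dist x z) then K x y z * f y * g z else 0

/-- The class `𝒜` of smooth truncation profiles: smooth `φ` with values in `[0,1]`,
vanishing on `[0,1/2]`, equal to `1` on `[1,∞)`, and `‖φ'‖_∞ ≤ 10`. -/
def memA (φ : ℝ → ℝ) : Prop :=
  ContDiff ℝ (⊤ : ℕ∞) φ ∧ (∀ t, φ t ∈ Set.Icc (0 : ℝ) 1) ∧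
    (∀ t ≤ (1 : ℝ) / 2, φ t = 0) ∧ (∀ t, (1 : ℝ) ≤ t → φ t = 1) ∧ ∀ t, |deriv φ t| ≤ 10

/-- The smoothly truncated kernel `K_ε^φ(x,y,z) = K(x,y,z) φ((|x-y|+|x-z|)/ε)`. -/
def smoothK {n : ℕ} (K : E n → E n → E n → ℂ) (φ : ℝ → ℝ) (ε : ℝ) :
    E n → E n → E n → ℂ :=
  fun x y z => K x y z * ((φ ((dist x y + dist x z) / ε) : ℝ) : ℂ)

/-- The smoothly truncated operator `T_ε^φ(f,g)(x) = ∬ K_ε^φ(x,y,z) f(y) g(z) dy dz`. -/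
def smoothT {n : ℕ} (K : E n → E n → E n → ℂ) (φ : ℝ → ℝ) (ε : ℝ) (f g : E n → ℂ)
    (x : E n) : ℂ :=
  ∫ y, ∫ z, smoothK K φ ε x y z * f y * g z

/-- The first adjoint kernel, `K^{1*}(x,y,z) = K(y,x,z)`. -/
def adj1 {n : ℕ} (K : E n → E n → E n → ℂ) : E n → E n → E n → ℂ := fun x y z => K y x z

/-- The second adjoint kernel, `K^{2*}(x,y,z) = K(z,y,x)`. -/
def adj2 {n : ℕ} (K : E n → E n → E n → ℂ) : E n → E n → E n → ℂ := fun x y z => K z y x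

/-- `C` is a weak boundedness constant of the bilinear operator `T`:
`|⟨T(1_I,1_I), 1_I⟩| ≤ C |I|` for all cubes `I ⊂ ℝⁿ`. -/
def WBPBound {n : ℕ} (T : (E n → ℂ) → (E n → ℂ) → E n → ℂ) (C : ℝ) : Prop :=
  ∀ Q : Cube n, ‖∫ x in Q.set, T (indC Q) (indC Q) x‖ ≤ C * Q.vol

/-! ### The `BMO` pairings `⟨T_ε(1,1), φ₀⟩` and testing conditions -/

/-- The pairing `⟨T_ε(1,1), φ₀⟩`, defined (for `φ₀` supported in the cube `R`, with mean
zero, and `c ≥ 3` a dilation factor) as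
`⟨T_ε(1_{cR},1_{cR}), φ₀⟩ + ∭ (K(x,y,z) - K(c_R,y,z)) 1_{(cR×cR)ᶜ}(y,z) φ₀(x) dy dz dx`. -/
def bmoPairing {n : ℕ} (K : E n → E n → E n → ℂ) (ε : ℝ) (φ₀ : E n → ℂ) (R : Cube n)
    (c : ℝ) : ℂ :=
  (∫ x, truncT K ε (indC (R.dilate c)) (indC (R.dilate c)) x * φ₀ x) +
    ∫ x, φ₀ x * ∫ y, ∫ z,
      if y ∈ (R.dilate c).set ∧ z ∈ (R.dilate c).set then 0
      else K x y z - K R.center y z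

/-- The pairing `⟨T_ε^{1*}(1,1), φ₀⟩ = ⟨T_ε(φ₀, 1_{cR}), 1_{cR}⟩ + (correction with K^{1*})`. -/
def bmoPairing1 {n : ℕ} (K : E n → E n → E n → ℂ) (ε : ℝ) (φ₀ : E n → ℂ) (R : Cube n)
    (c : ℝ) : ℂ :=
  (∫ x, truncT K ε φ₀ (indC (R.dilate c)) x * indC (R.dilate c) x) +
    ∫ x, φ₀ x * ∫ y, ∫ z,
      if y ∈ (R.dilate c).set ∧ z ∈ (R.dilate c).set then 0
      else adj1 K x y z - adj1 K R.center y z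

/-- The pairing `⟨T_ε^{2*}(1,1), φ₀⟩ = ⟨T_ε(1_{cR}, φ₀), 1_{cR}⟩ + (correction with K^{2*})`. -/
def bmoPairing2 {n : ℕ} (K : E n → E n → E n → ℂ) (ε : ℝ) (φ₀ : E n → ℂ) (R : Cube n)
    (c : ℝ) : ℂ :=
  (∫ x, truncT K ε (indC (R.dilate c)) φ₀ x * indC (R.dilate c) x) +
    ∫ x, φ₀ x * ∫ y, ∫ z,
      if y ∈ (R.dilate c).set ∧ z ∈ (R.dilate c).set then 0
      else adj2 K x y z - adj2 K R.center y z

/-- `B` is an admissible `BMO` bound for `T_ε(1,1)`: `|⟨T_ε(1,1), φ₀⟩| ≤ B |R|`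
over all admissible testing data. -/
def BMOBound {n : ℕ} (K : E n → E n → E n → ℂ) (ε : ℝ) (B : ℝ) : Prop :=
  ∀ (R : Cube n) (φ₀ : E n → ℂ), Measurable φ₀ → Function.support φ₀ ⊆ R.clSet →
    (∀ x, ‖φ₀ x‖ ≤ 1) → (∫ x, φ₀ x) = 0 →
    ∀ c : ℝ, 3 ≤ c → ε < 2⁻¹ * (c - 1) * R.side →
      ‖bmoPairing K ε φ₀ R c‖ ≤ B * R.vol

/-- `B` is an admissible `BMO` bound for `T_ε^{1*}(1,1)`. -/
def BMOBound1 {n : ℕ} (K : E n → E n → E n → ℂ) (ε : ℝ) (B : ℝ) : Prop :=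
  ∀ (R : Cube n) (φ₀ : E n → ℂ), Measurable φ₀ → Function.support φ₀ ⊆ R.clSet →
    (∀ x, ‖φ₀ x‖ ≤ 1) → (∫ x, φ₀ x) = 0 →
    ∀ c : ℝ, 3 ≤ c → ε < 2⁻¹ * (c - 1) * R.side →
      ‖bmoPairing1 K ε φ₀ R c‖ ≤ B * R.vol

/-- `B` is an admissible `BMO` bound for `T_ε^{2*}(1,1)`. -/
def BMOBound2 {n : ℕ} (K : E n → E n → E n → ℂ) (ε : ℝ) (B : ℝ) : Prop :=
  ∀ (R : Cube n) (φ₀ : E n → ℂ), Measurable φ₀ → Function.support φ₀ ⊆ R.clSet →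
    (∀ x, ‖φ₀ x‖ ≤ 1) → (∫ x, φ₀ x) = 0 →
    ∀ c : ℝ, 3 ≤ c → ε < 2⁻¹ * (c - 1) * R.side →
      ‖bmoPairing2 K ε φ₀ R c‖ ≤ B * R.vol

/-! ### Sparse collections -/

/-- A collection `𝒮` of cubes is `η`-sparse: every `Q ∈ 𝒮` carries a major measurable
subset `E_Q ⊆ Q` with `|E_Q| > η |Q|`, the sets `E_Q` being pairwise disjoint. -/
def IsSparse {n : ℕ} (η : ℝ) (𝒮 : Set (Cube n)) : Prop :=
  ∃ Esel : Cube n → Set (E n),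
    (∀ Q ∈ 𝒮, MeasurableSet (Esel Q) ∧ Esel Q ⊆ Q.set ∧
      ENNReal.ofReal (η * Q.vol) < MeasureTheory.volume (Esel Q)) ∧
    𝒮.Pairwise fun Q R => Disjoint (Esel Q) (Esel R)

/-- The sparse form `Λ_𝒮(f₁,f₂,f₃) = Σ_{Q ∈ 𝒮} |Q| ⟨|f₁|⟩_Q ⟨|f₂|⟩_Q ⟨|f₃|⟩_Q`. -/
def sparseForm {n : ℕ} (𝒮 : Set (Cube n)) (f₁ f₂ f₃ : E n → ℂ) : ℝ :=
  ∑' Q : 𝒮, (Q : Cube n).vol * avgAbs Q f₁ * avgAbs Q f₂ * avgAbs Q f₃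

/-! ### Bilinear dyadic shifts and paraproducts, as trilinear forms -/

/-- A trilinear form on functions on `ℝⁿ`. -/
abbrev TriForm (n : ℕ) : Type := (E n → ℂ) → (E n → ℂ) → (E n → ℂ) → ℂ

/-- The index set of a bilinear dyadic shift of complexity `(i,j,k)` in the grid `𝒟`:
tuples of cubes `I, J, K ⊆ Q` of `𝒟` with `ℓ(I) = 2^{-i} ℓ(Q)`, `ℓ(J) = 2^{-j} ℓ(Q)`,
`ℓ(K) = 2^{-k} ℓ(Q)`, together with Haar signatures, `h_K` being cancellative and at most
one of `h_I, h_J` being noncancellative. -/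
structure ShiftIndex (n : ℕ) (𝒟 : Set (Cube n)) (i j k : ℕ) where
  Q : Cube n
  I : Cube n
  J : Cube n
  K : Cube n
  ηf : Fin n → Bool
  ηg : Fin n → Bool
  ηh : Fin n → Bool
  memQ : Q ∈ 𝒟
  memI : I ∈ 𝒟
  memJ : J ∈ 𝒟
  memK : K ∈ 𝒟
  subI : I.set ⊆ Q.set
  subJ : J.set ⊆ Q.set
  subK : K.set ⊆ Q.set
  sideI : I.side = Q.side / 2 ^ i
  sideJ : J.side = Q.side / 2 ^ j
  sideK : K.side = Q.side / 2 ^ k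
  cancel_h : ηh ≠ fun _ => false
  cancel_fg : ¬(ηf = (fun _ => false) ∧ ηg = (fun _ => false))

/-- `Λ` is (the trilinear form of) a cancellative bilinear dyadic shift of complexity
`(i,j,k)` in the grid `𝒟`: `Λ(f,g,h) = Σ α_{I,J,K,Q} ⟨f, h̃_I⟩ ⟨g, h̃_J⟩ ⟨h, h_K⟩`
with `|α_{I,J,K,Q}| ≤ |I|^{1/2} |J|^{1/2} |K|^{1/2} / |Q|²`. -/
def IsShiftForm {n : ℕ} (𝒟 : Set (Cube n)) (i j k : ℕ) (Λ : TriForm n) : Prop :=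
  ∃ α : ShiftIndex n 𝒟 i j k → ℂ,
    (∀ t, ‖α t‖ ≤ Real.sqrt (t.I.vol * t.J.vol * t.K.vol) / t.Q.vol ^ 2) ∧
    ∀ f g h, Λ f g h =
      ∑' t : ShiftIndex n 𝒟 i j k,
        α t * haarPairing f t.I t.ηf * haarPairing g t.J t.ηg * haarPairing h t.K t.ηh

/-- `Λ` is a cancellative bilinear shift of complexity `(i,i,k)` or `(i,i+1,k)` in `𝒟`,
or an adjoint (`⟨S^{1*}(f,g),h⟩ = ⟨S(h,g),f⟩`, `⟨S^{2*}(f,g),h⟩ = ⟨S(f,h),g⟩`) of such. -/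
def IsExtShiftForm {n : ℕ} (𝒟 : Set (Cube n)) (i k : ℕ) (Λ : TriForm n) : Prop :=
  ∃ Λ₀ : TriForm n, (IsShiftForm 𝒟 i i k Λ₀ ∨ IsShiftForm 𝒟 i (i + 1) k Λ₀) ∧
    ((∀ f g h, Λ f g h = Λ₀ f g h) ∨ (∀ f g h, Λ f g h = Λ₀ h g f) ∨
      (∀ f g h, Λ f g h = Λ₀ f h g))

/-- The index set of a bilinear paraproduct in the grid `𝒟`: cubes `K ∈ 𝒟` with a
cancellative Haar signature. -/
structure ParaIndex (n : ℕ) (𝒟 : Set (Cube n)) where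
  K : Cube n
  η : Fin n → Bool
  mem : K ∈ 𝒟
  cancel : η ≠ fun _ => false

/-- `Λ` is (the trilinear form of) a bilinear paraproduct
`Π_β(f,g) = Σ_K β_K ⟨f⟩_K ⟨g⟩_K h_K` in the grid `𝒟`, with coefficients satisfying the
Carleson normalization `Σ_{K ⊆ K₀} |β_K|² ≤ |K₀|` for all `K₀ ∈ 𝒟`. -/
def IsParaForm {n : ℕ} (𝒟 : Set (Cube n)) (Λ : TriForm n) : Prop :=
  ∃ β : ParaIndex n 𝒟 → ℂ,
    (∀ K₀ ∈ 𝒟, (∑' t : {t : ParaIndex n 𝒟 // t.K.set ⊆ K₀.set},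
        ((‖β t.1‖₊ : ℝ≥0∞) ^ 2)) ≤ ENNReal.ofReal K₀.vol) ∧
    ∀ f g h, Λ f g h =
      ∑' t : ParaIndex n 𝒟, β t * avg t.K f * avg t.K g * haarPairing h t.K t.η

/-!
Climb the dyadic ancestors of `K`. An ancestor `P` with `ℓ(P) ≥ max(2^r ℓ(K), ℓ(I))` that does not
contain `I` is disjoint from it, so goodness of `K` gives
`ℓ(K)^γ ℓ(P)^(1-γ) < d(K, ∂P) ≤ d(K, I)`. As `ℓ(K)^γ ℓ(P)^(1-γ) → ∞`, some ancestor contains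
`I ∪ J ∪ K`; let `Q` be the smallest one. Either `ℓ(Q) ≤ 2^(r+2) ℓ(J)`, and the hypothesis
`ℓ(K)^γ ℓ(J)^(1-γ) < max(d(K,I), d(K,J))` already gives the bound, or the child of `Q` containing
`K` is large enough for the previous estimate, and it misses `I` or `J`.
-/

theorem _root_.IsPreconnected.inter_frontier_nonempty {X : Type*} [TopologicalSpace X]
    {s t : Set X} (hs : IsPreconnected s) (hst : (s ∩ t).Nonempty) (hs_t : (s \ t).Nonempty) :
    (s ∩ frontier t).Nonempty := by
  by_contra hfr
  have hsub : s ⊆ interior t ∪ (closure t)ᶜ := fun x hx => by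
    by_contra hx'
    simp only [mem_union, mem_compl_iff, not_or, not_not] at hx'
    exact hfr ⟨x, hx, hx'.2, hx'.1⟩
  rcases hs.subset_or_subset isOpen_interior isClosed_closure.isOpen_compl
      (disjoint_compl_right_iff_subset.2 interior_subset_closure) hsub with hint | hext
  · obtain ⟨x, hxs, hxt⟩ := hs_t
    exact hxt (interior_subset (hint hxs))
  · obtain ⟨x, hxs, hxt⟩ := hst
    exact hext hxs (subset_closure hxt)

theorem _root_.exists_mem_frontier_dist_le {V : Type*} [SeminormedAddCommGroup V]
    [NormedSpace ℝ V] {A : Set V} {x y : V} (hx : x ∈ closure A) (hy : y ∈ closure Aᶜ) :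
    ∃ z ∈ frontier A, dist x z ≤ dist x y := by
  set B := Metric.closedBall x (dist x y)
  by_cases hBA : (B ∩ A).Nonempty
  · by_cases hB_A : (B \ A).Nonempty
    · obtain ⟨z, hzB, hzA⟩ :=
        (convex_closedBall x _).isPreconnected.inter_frontier_nonempty hBA hB_A
      exact ⟨z, hzA, Metric.mem_closedBall'.1 hzB⟩
    · have hyA : y ∈ A := by
        by_contra hyA
        exact hB_A ⟨y, Metric.mem_closedBall'.2 le_rfl, hyA⟩
      exact ⟨y, ⟨subset_closure hyA, by rwa [closure_compl] at hy⟩, le_rfl⟩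
  · have hxA : x ∉ A := fun hxA => hBA ⟨x, Metric.mem_closedBall_self dist_nonneg, hxA⟩
    exact ⟨x, ⟨hx, fun hx' => hxA (interior_subset hx')⟩, by simp⟩

section Distance

variable {n : ℕ}

theorem setDist_le_dist {s t : Set (E n)} {x y : E n} (hx : x ∈ s) (hy : y ∈ t) :
    setDist s t ≤ dist x y :=
  csInf_le ⟨0, by rintro _ ⟨a, -, b, -, rfl⟩; exact dist_nonneg⟩ (mem_image2_of_mem hx hy)

theorem setDist_frontier_le {s t A : Set (E n)} (hs : s.Nonempty) (ht : t.Nonempty)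
    (hsA : s ⊆ closure A) (htA : t ⊆ closure Aᶜ) :
    setDist s (frontier A) ≤ setDist s t := by
  refine le_csInf (hs.image2 ht) ?_
  rintro _ ⟨x, hx, y, hy, rfl⟩
  obtain ⟨z, hz, hxz⟩ := exists_mem_frontier_dist_le (hsA hx) (htA hy)
  exact (setDist_le_dist hx hz).trans hxz

namespace Cube

theorem set_eq_pi (Q : Cube n) :
    Q.set = univ.pi fun i => Ico (Q.corner i) (Q.corner i + Q.side) := by
  ext x
  simp [Cube.set]

theorem corner_mem_set (Q : Cube n) : Q.corner ∈ Q.set :=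
  fun _ => ⟨le_rfl, lt_add_of_pos_right _ Q.side_pos⟩

theorem closure_set (Q : Cube n) : closure Q.set = Q.clSet := by
  rw [set_eq_pi, closure_pi_set]
  ext x
  simp only [closure_Ico (lt_add_of_pos_right _ Q.side_pos).ne, mem_pi, mem_univ,
    true_implies, mem_Icc, Cube.clSet, mem_ofPred_eq]

end Cube

theorem setDist_clSet_frontier_le_cubeDist {K P I : Cube n} (hKP : K.set ⊆ P.set)
    (hIP : Disjoint I.set P.set) : setDist K.clSet (frontier P.set) ≤ cubeDist K I := by
  rw [cubeDist, ← K.closure_set, ← I.closure_set]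
  exact setDist_frontier_le ⟨_, subset_closure K.corner_mem_set⟩
    ⟨_, subset_closure I.corner_mem_set⟩ (closure_mono hKP) (closure_mono hIP.subset_compl_right)

end Distance

section Dyadic

variable {n : ℕ}

def shiftTerm (ω : ℤ → Fin n → Bool) (i : Fin n) (j : ℤ) : ℝ :=
  (2 : ℝ) ^ (-j) * if ω j i then 1 else 0

theorem exists_int_shiftTerm_eq (ω : ℤ → Fin n → Bool) (i : Fin n) (j : ℤ) :
    ∃ b : ℤ, shiftTerm ω i j = b * 2 ^ (-j) :=
  ⟨if ω j i then 1 else 0, by rw [shiftTerm, mul_comm]; push_cast; rfl⟩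

theorem summable_shiftTerm (ω : ℤ → Fin n → Bool) (i : Fin n) (k : ℤ) :
    Summable fun m : ℕ => shiftTerm ω i (k + m) := by
  refine .of_nonneg_of_le (fun m => by unfold shiftTerm; positivity) (fun m => ?_)
    (summable_geometric_two.mul_left ((2 : ℝ) ^ (-k)))
  have h2 : (2 : ℝ) ^ (-(k + m)) = 2 ^ (-k) * (1 / 2) ^ m := by
    rw [neg_add, zpow_add₀ two_ne_zero, zpow_neg (2 : ℝ) m, zpow_natCast, one_div, inv_pow]
  rw [shiftTerm, h2]
  exact mul_le_of_le_one_right (by positivity) (by split_ifs <;> norm_num)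

theorem gridShift_eq_tsum_nat (ω : ℤ → Fin n → Bool) (k : ℤ) (i : Fin n) :
    gridShift ω k i = ∑' m : ℕ, shiftTerm ω i (k + 1 + m) :=
  let e : ℕ ≃ {j : ℤ // k < j} :=
    { toFun m := ⟨k + 1 + m, by omega⟩
      invFun j := (j.1 - (k + 1)).toNat
      left_inv m := by simp
      right_inv j := Subtype.ext (by have := j.2; simp; omega) }
  (e.tsum_eq fun j => shiftTerm ω i j).symm

theorem gridShift_sub_one (ω : ℤ → Fin n → Bool) (k : ℤ) (i : Fin n) :
    gridShift ω (k - 1) i = shiftTerm ω i k + gridShift ω k i := by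
  simp only [gridShift_eq_tsum_nat, sub_add_cancel]
  rw [(summable_shiftTerm ω i k).tsum_eq_zero_add]
  push_cast
  simp only [add_zero, add_assoc, add_comm (1 : ℤ)]

theorem exists_int_gridShift_sub_eq (ω : ℤ → Fin n → Bool) (i : Fin n) (d : ℕ) (k : ℤ) :
    ∃ q : ℤ, gridShift ω (k - d) i - gridShift ω k i = q * 2 ^ (-k) := by
  induction d generalizing k with
  | zero => exact ⟨0, by simp⟩
  | succ d ih =>
    obtain ⟨q, hq⟩ := ih (k - 1)
    obtain ⟨b, hb⟩ := exists_int_shiftTerm_eq ω i k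
    have hk : k - ((d + 1 : ℕ) : ℤ) = k - 1 - d := by push_cast; ring
    have h2 : (2 : ℝ) ^ (-(k - 1)) = 2 * 2 ^ (-k) := by
      rw [neg_sub, sub_eq_add_neg, zpow_add₀ two_ne_zero, zpow_one]
    refine ⟨2 * q + b, ?_⟩
    rw [hk]
    push_cast
    linear_combination hq + gridShift_sub_one ω k i + hb + q * h2

theorem two_zpow_neg_sub_natCast (k : ℤ) (d : ℕ) : (2 : ℝ) ^ (-(k - d)) = 2 ^ d * 2 ^ (-k) := by
  rw [neg_sub, sub_eq_add_neg, zpow_add₀ two_ne_zero, zpow_natCast]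

theorem Ico_subset_or_disjoint_of_sub_eq_int_mul {a b h : ℝ} (hh : 0 < h) (N : ℕ) {q : ℤ}
    (hq : a - b = q * h) :
    Ico a (a + h) ⊆ Ico b (b + N * h) ∨ Disjoint (Ico a (a + h)) (Ico b (b + N * h)) := by
  rcases lt_or_ge q 0 with hq0 | hq0
  · have : (q : ℝ) + 1 ≤ 0 := by exact_mod_cast hq0
    right
    exact disjoint_left.2 fun x hxa hxb => by nlinarith [hxa.2, hxb.1]
  rcases lt_or_ge q N with hqN | hqN
  · have hq0' : (0 : ℝ) ≤ q := by exact_mod_cast hq0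
    have hqN' : (q : ℝ) + 1 ≤ N := by exact_mod_cast hqN
    left
    exact Ico_subset_Ico (by nlinarith) (by nlinarith)
  · have hqN' : (N : ℝ) ≤ q := by exact_mod_cast hqN
    right
    exact disjoint_left.2 fun x hxa hxb => by nlinarith [hxa.1, hxb.2]

theorem subset_or_disjoint_of_side_le {ω : ℤ → Fin n → Bool} {P Q : Cube n}
    (hP : P ∈ dyadicGrid ω) (hQ : Q ∈ dyadicGrid ω) (hside : Q.side ≤ P.side) :
    Q.set ⊆ P.set ∨ Disjoint Q.set P.set := by
  obtain ⟨k, m, hk, hm⟩ := hQ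
  obtain ⟨k', m', hk', hm'⟩ := hP
  obtain ⟨d, rfl⟩ : ∃ d : ℕ, k' = k - d := by
    rw [hk, hk', zpow_le_zpow_iff_right₀ one_lt_two] at hside
    exact ⟨(k - k').toNat, by omega⟩
  have hPside : P.side = ((2 ^ d : ℕ) : ℝ) * Q.side := by
    rw [hk', hk, two_zpow_neg_sub_natCast]; push_cast; rfl
  have hcoord : ∀ i, Ico (Q.corner i) (Q.corner i + Q.side) ⊆ Ico (P.corner i) (P.corner i + P.side)
      ∨ Disjoint (Ico (Q.corner i) (Q.corner i + Q.side))
        (Ico (P.corner i) (P.corner i + P.side)) := fun i => by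
    obtain ⟨q, hq⟩ := exists_int_gridShift_sub_eq ω i d k
    rw [hPside]
    refine Ico_subset_or_disjoint_of_sub_eq_int_mul Q.side_pos _ (q := m i - m' i * 2 ^ d - q) ?_
    rw [hm, hm', hk, two_zpow_neg_sub_natCast]
    push_cast
    linear_combination -hq
  rw [Q.set_eq_pi, P.set_eq_pi]
  by_cases hsub : ∀ i, Ico (Q.corner i) (Q.corner i + Q.side) ⊆
      Ico (P.corner i) (P.corner i + P.side)
  · exact .inl (pi_mono fun i _ => hsub i)
  · obtain ⟨i, hi⟩ := not_forall.1 hsub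
    exact .inr (disjoint_univ_pi.2 ⟨i, (hcoord i).resolve_left hi⟩)

theorem exists_mem_dyadicGrid_mem_set (ω : ℤ → Fin n → Bool) (k : ℤ) (x : E n) :
    ∃ P ∈ dyadicGrid ω, P.side = 2 ^ (-k) ∧ x ∈ P.set := by
  have h2k : (0 : ℝ) < 2 ^ (-k) := zpow_pos two_pos _
  set m : Fin n → ℤ := fun i => ⌊(x i - gridShift ω k i) / 2 ^ (-k)⌋
  refine ⟨⟨fun i => m i * 2 ^ (-k) + gridShift ω k i, 2 ^ (-k), h2k⟩,
    ⟨k, m, rfl, fun _ => rfl⟩, rfl, fun i => ⟨?_, ?_⟩⟩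
  · have := (le_div_iff₀ h2k).1 (Int.floor_le ((x i - gridShift ω k i) / 2 ^ (-k)))
    dsimp only
    linarith
  · have := (div_lt_iff₀ h2k).1 (Int.lt_floor_add_one ((x i - gridShift ω k i) / 2 ^ (-k)))
    dsimp only
    linarith

theorem exists_ancestor {ω : ℤ → Fin n → Bool} {K : Cube n} (hK : K ∈ dyadicGrid ω) (m : ℕ) :
    ∃ P ∈ dyadicGrid ω, K.set ⊆ P.set ∧ P.side = 2 ^ m * K.side := by
  obtain ⟨k, -, hk, -⟩ := id hK
  obtain ⟨P, hP, hPside, hKP⟩ := exists_mem_dyadicGrid_mem_set ω (k - m) K.corner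
  rw [two_zpow_neg_sub_natCast, ← hk] at hPside
  have hside : K.side ≤ P.side := by
    rw [hPside]
    exact le_mul_of_one_le_left K.side_pos.le (one_le_pow₀ one_le_two)
  refine ⟨P, hP, ?_, hPside⟩
  exact (subset_or_disjoint_of_side_le hP hK hside).resolve_right
    (not_disjoint_iff.2 ⟨K.corner, K.corner_mem_set, hKP⟩)

end Dyadic

theorem rpow_mul_rpow_le_mul_of_le_mul {γ h a b C : ℝ} (hγ0 : 0 ≤ γ) (hγ1 : γ ≤ 1)
    (hh : 0 ≤ h) (ha : 0 ≤ a) (hb : 0 ≤ b) (hC : 1 ≤ C) (hab : a ≤ C * b) :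
    h ^ γ * a ^ (1 - γ) ≤ C * (h ^ γ * b ^ (1 - γ)) := by
  have hab' : a ^ (1 - γ) ≤ C * b ^ (1 - γ) :=
    calc a ^ (1 - γ) ≤ (C * b) ^ (1 - γ) := Real.rpow_le_rpow ha hab (by linarith)
      _ = C ^ (1 - γ) * b ^ (1 - γ) := Real.mul_rpow (by linarith) hb
      _ ≤ C * b ^ (1 - γ) := by
        gcongr
        exact Real.rpow_le_self_of_one_le hC (by linarith)
  calc h ^ γ * a ^ (1 - γ) ≤ h ^ γ * (C * b ^ (1 - γ)) :=
        mul_le_mul_of_nonneg_left hab' (Real.rpow_nonneg hh _)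
    _ = C * (h ^ γ * b ^ (1 - γ)) := by ring

section Good

open Filter

variable {n : ℕ} {ω : ℤ → Fin n → Bool} {r : ℕ} {γ : ℝ}

theorem IsGood.rpow_mul_rpow_lt_cubeDist {K P I : Cube n} (hgood : IsGood (dyadicGrid ω) r γ K)
    (hP : P ∈ dyadicGrid ω) (hKP : K.set ⊆ P.set) (hrP : 2 ^ r * K.side ≤ P.side)
    (hI : I ∈ dyadicGrid ω) (hIP : I.side ≤ P.side) (hIP' : ¬ I.set ⊆ P.set) :
    K.side ^ γ * P.side ^ (1 - γ) < cubeDist K I :=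
  (hgood P hP hrP).trans_le <| setDist_clSet_frontier_le_cubeDist hKP <|
    (subset_or_disjoint_of_side_le hP hI hIP).resolve_left hIP'

theorem IsGood.rpow_mul_rpow_lt_max_cubeDist {K P I J : Cube n}
    (hgood : IsGood (dyadicGrid ω) r γ K) (hP : P ∈ dyadicGrid ω) (hKP : K.set ⊆ P.set)
    (hrP : 2 ^ r * K.side ≤ P.side) (hI : I ∈ dyadicGrid ω) (hJ : J ∈ dyadicGrid ω)
    (hIP : I.side ≤ P.side) (hJP : J.side ≤ P.side) (hIJP : ¬ (I.set ⊆ P.set ∧ J.set ⊆ P.set)) :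
    K.side ^ γ * P.side ^ (1 - γ) < max (cubeDist K I) (cubeDist K J) := by
  rcases not_and_or.1 hIJP with hIP' | hJP'
  · exact (hgood.rpow_mul_rpow_lt_cubeDist hP hKP hrP hI hIP hIP').trans_le (le_max_left _ _)
  · exact (hgood.rpow_mul_rpow_lt_cubeDist hP hKP hrP hJ hJP hJP').trans_le (le_max_right _ _)

theorem IsGood.exists_ancestor_superset (hγ1 : γ < 1) {I J K : Cube n}
    (hI : I ∈ dyadicGrid ω) (hJ : J ∈ dyadicGrid ω) (hK : K ∈ dyadicGrid ω)
    (hgood : IsGood (dyadicGrid ω) r γ K) (hJI : J.side ≤ I.side) :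
    ∃ m, ∃ P ∈ dyadicGrid ω, K.set ⊆ P.set ∧ P.side = 2 ^ m * K.side ∧
      I.set ⊆ P.set ∧ J.set ⊆ P.set := by
  have hlim : Tendsto (fun m : ℕ => (2 : ℝ) ^ m * K.side) atTop atTop :=
    (tendsto_pow_atTop_atTop_of_one_lt one_lt_two).atTop_mul_const K.side_pos
  have hlim' : Tendsto (fun m : ℕ => K.side ^ γ * ((2 : ℝ) ^ m * K.side) ^ (1 - γ))
      atTop atTop :=
    ((tendsto_rpow_atTop (by linarith)).comp hlim).const_mul_atTop
      (Real.rpow_pos_of_pos K.side_pos _)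
  obtain ⟨m, hmr, hmI, hmD⟩ := ((hlim.eventually_ge_atTop (2 ^ r * K.side)).and
    ((hlim.eventually_ge_atTop I.side).and
      (hlim'.eventually_ge_atTop (max (cubeDist K I) (cubeDist K J))))).exists
  obtain ⟨P, hP, hKP, hPside⟩ := exists_ancestor hK m
  rw [← hPside] at hmr hmI hmD
  refine ⟨m, P, hP, hKP, hPside, not_not.1 fun hIJP => ?_⟩
  exact (hgood.rpow_mul_rpow_lt_max_cubeDist hP hKP hmr hI hJ hmI (hJI.trans hmI) hIJP).not_ge hmD

theorem exists_common_ancestor_of_isGood (hγ0 : 0 ≤ γ) (hγ1 : γ < 1) {I J K : Cube n}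
    (hI : I ∈ dyadicGrid ω) (hJ : J ∈ dyadicGrid ω) (hK : K ∈ dyadicGrid ω)
    (hgood : IsGood (dyadicGrid ω) r γ K) (hKI : K.side ≤ I.side) (hIJ : I.side = 2 * J.side)
    (hsep : K.side ^ γ * J.side ^ (1 - γ) ≤ max (cubeDist K I) (cubeDist K J)) :
    ∃ Q ∈ dyadicGrid ω, I.set ∪ J.set ∪ K.set ⊆ Q.set ∧
      K.side ^ γ * Q.side ^ (1 - γ) ≤ 2 ^ (r + 2) * max (cubeDist K I) (cubeDist K J) := by
  set D := max (cubeDist K I) (cubeDist K J)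
  have hJpos := J.side_pos
  have hex := hgood.exists_ancestor_superset hγ1 hI hJ hK (by linarith)
  obtain ⟨Q, hQ, hKQ, hQside, hIQ, hJQ⟩ := Nat.find_spec hex
  refine ⟨Q, hQ, union_subset (union_subset hIQ hJQ) hKQ, ?_⟩
  have hD : 0 ≤ D :=
    (mul_nonneg (Real.rpow_nonneg K.side_pos.le _) (Real.rpow_nonneg hJpos.le _)).trans hsep
  have h1r : (1 : ℝ) ≤ 2 ^ r := one_le_pow₀ one_le_two
  have h4r : (2 : ℝ) ^ (r + 2) = 2 ^ r * 4 := by rw [pow_add]; norm_num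
  rcases le_or_gt Q.side (2 ^ (r + 2) * J.side) with hsmall | hlarge
  · calc K.side ^ γ * Q.side ^ (1 - γ) ≤ 2 ^ (r + 2) * (K.side ^ γ * J.side ^ (1 - γ)) :=
          rpow_mul_rpow_le_mul_of_le_mul hγ0 hγ1.le K.side_pos.le Q.side_pos.le hJpos.le
            (by linarith) hsmall
      _ ≤ 2 ^ (r + 2) * D := by gcongr
  · obtain ⟨m, hm⟩ : ∃ m, Nat.find hex = m + 1 := Nat.exists_eq_succ_of_ne_zero fun h0 => by
      rw [h0, pow_zero, one_mul] at hQside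
      nlinarith
    obtain ⟨C, hC, hKC, hCside⟩ := exists_ancestor hK m
    have hQC : Q.side = 2 * C.side := by rw [hQside, hm, hCside, pow_succ]; ring
    have hIC : 2 ^ r * I.side ≤ C.side := by rw [hIJ]; rw [h4r] at hlarge; linarith
    have hIC' : I.side ≤ C.side := (le_mul_of_one_le_left I.side_pos.le h1r).trans hIC
    have hCD : K.side ^ γ * C.side ^ (1 - γ) < D :=
      hgood.rpow_mul_rpow_lt_max_cubeDist hC hKC
        ((mul_le_mul_of_nonneg_left hKI (by positivity)).trans hIC) hI hJ hIC' (by linarith)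
        fun hIJC => Nat.find_min hex (by omega) ⟨C, hC, hKC, hCside, hIJC⟩
    calc K.side ^ γ * Q.side ^ (1 - γ) ≤ 2 * (K.side ^ γ * C.side ^ (1 - γ)) :=
          rpow_mul_rpow_le_mul_of_le_mul hγ0 hγ1.le K.side_pos.le Q.side_pos.le C.side_pos.le
            one_le_two hQC.le
      _ ≤ 2 ^ (r + 2) * D := by rw [h4r]; nlinarith

end Good

theorem separated_part_common_parent_general (n : ℕ) (α : ℝ)
    (hα : α ∈ Set.Ioc (0 : ℝ) 1) (r : ℕ) :
    ∃ c : ℝ, 0 < c ∧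
      ∀ (ω : ℤ → Fin n → Bool) (I J K : Cube n),
        I ∈ dyadicGrid ω → J ∈ dyadicGrid ω → K ∈ dyadicGrid ω →
        IsGood (dyadicGrid ω) r (α / (2 * (2 * (n : ℝ) + α))) K →
        K.side ≤ I.side → I.side = 2 * J.side →
        K.side ^ (α / (2 * (2 * (n : ℝ) + α))) *
            J.side ^ (1 - α / (2 * (2 * (n : ℝ) + α))) <
          max (cubeDist K I) (cubeDist K J) →
        ∃ Q ∈ dyadicGrid ω, I.set ∪ J.set ∪ K.set ⊆ Q.set ∧
          c * (K.side ^ (α / (2 * (2 * (n : ℝ) + α))) *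
              Q.side ^ (1 - α / (2 * (2 * (n : ℝ) + α)))) ≤
            max (cubeDist K I) (cubeDist K J) := by
  have hα0 := hα.1
  have hden : 0 < 2 * (2 * (n : ℝ) + α) := by positivity
  have hγ1 : α / (2 * (2 * (n : ℝ) + α)) < 1 := by
    rw [div_lt_one hden]; linarith [(Nat.cast_nonneg n : (0 : ℝ) ≤ n)]
  refine ⟨(2 ^ (r + 2))⁻¹, by positivity, fun ω I J K hI hJ hK hgood hKI hIJ hsep => ?_⟩
  obtain ⟨Q, hQ, hIJKQ, hbound⟩ := exists_common_ancestor_of_isGood (div_pos hα0 hden).le hγ1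
    hI hJ hK hgood hKI hIJ hsep.le
  exact ⟨Q, hQ, hIJKQ, (inv_mul_le_iff₀ (by positivity)).2 hbound⟩

/-- existence of a common dyadic parent in the separated part:
if `K` is a good cube, `ℓ(K) ≤ ℓ(I) = 2ℓ(J)` and
`max(d(K,I), d(K,J)) > ℓ(K)^γ ℓ(J)^(1-γ)` with `γ = α/(2(2n+α))`, then there is a cube
`Q` of the grid containing `I ∪ J ∪ K` with
`max(d(K,I), d(K,J)) ≥ c ℓ(K)^γ ℓ(Q)^(1-γ)`, where `c = c(n,r,γ) > 0`. -/
theorem separated_part_common_parent (n : ℕ) (hn : 0 < n) (α : ℝ)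
    (hα : α ∈ Set.Ioc (0 : ℝ) 1) (r : ℕ) (hr : 1 ≤ r) :
    ∃ c : ℝ, 0 < c ∧
      ∀ (ω : ℤ → Fin n → Bool) (I J K : Cube n),
        I ∈ dyadicGrid ω → J ∈ dyadicGrid ω → K ∈ dyadicGrid ω →
        IsGood (dyadicGrid ω) r (α / (2 * (2 * (n : ℝ) + α))) K →
        K.side ≤ I.side → I.side = 2 * J.side →
        K.side ^ (α / (2 * (2 * (n : ℝ) + α))) *
            J.side ^ (1 - α / (2 * (2 * (n : ℝ) + α))) <
          max (cubeDist K I) (cubeDist K J) →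
        ∃ Q ∈ dyadicGrid ω, I.set ∪ J.set ∪ K.set ⊆ Q.set ∧
          c * (K.side ^ (α / (2 * (2 * (n : ℝ) + α))) *
              Q.side ^ (1 - α / (2 * (2 * (n : ℝ) + α)))) ≤
            max (cubeDist K I) (cubeDist K J) :=
  separated_part_common_parent_general n α hα r

end Bilinear
end
end

section
/- Let 𝒟 be a dyadic grid on ℝⁿ, let α ∈ (0,1], γ = α/(2(2n+α)), and fix an integer r ≥ 1. Let I, J ∈ 𝒟 and let K ∈ 𝒟 be good, with ℓ(K) ≤ ℓ(I) = 2ℓ(J), max(d(K,I), d(K,J)) ≤ ℓ(K)^γ ℓ(J)^{1−γ}, and suppose that K ∩ I = ∅ or K ∩ J = ∅. Then ℓ(I) ≤ 2^r ℓ(K). -/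
open MeasureTheory Set
open scoped ENNReal NNReal Classical

noncomputable section

namespace Bilinear

/- If `ℓ(I) > 2^r ℓ(K)`, then whichever of `I`, `J` misses `K` has side at least `2^r ℓ(K)`
(for `J` because side lengths are powers of `2`). A cube disjoint from `K` is at least as far
from `K` as its boundary is, so goodness of `K` puts it farther than `ℓ(K)^γ ℓ(·)^(1-γ)` from
`K`, against the distance hypothesis. -/

section Frontier

variable {F : Type*} [NormedAddCommGroup F] [NormedSpace ℝ F]

theorem exists_mem_frontier_mem_segment {t : Set F} {p q : F} (hp : p ∉ interior t)
    (hq : q ∈ closure t) : ∃ z ∈ frontier t, z ∈ segment ℝ p q := by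
  by_contra! h
  have hq' : q ∈ interior t := by
    by_contra hqi
    exact h q ⟨hq, hqi⟩ (right_mem_segment ℝ p q)
  have hp' : p ∉ closure t := fun hpc => h p ⟨hpc, hp⟩ (left_mem_segment ℝ p q)
  have hcover : segment ℝ p q ⊆ interior t ∪ (closure t)ᶜ := by
    intro x hx
    by_cases hxi : x ∈ interior t
    · exact Or.inl hxi
    · exact Or.inr fun hxc => h x ⟨hxc, hxi⟩ hx
  obtain ⟨x, -, hxi, hxc⟩ := (convex_segment p q).isPreconnected _ _ isOpen_interior
    isClosed_closure.isOpen_compl hcover ⟨q, right_mem_segment ℝ p q, hq'⟩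
    ⟨p, left_mem_segment ℝ p q, hp'⟩
  exact hxc (interior_subset_closure hxi)

end Frontier

variable {n : ℕ}

theorem setDist_frontier_le_s5 {s t u : Set (E n)} (hs : Disjoint s (interior t))
    (hu : u ⊆ closure t) (hs₀ : s.Nonempty) (hu₀ : u.Nonempty) :
    setDist s (frontier t) ≤ setDist s u := by
  refine le_csInf (hs₀.image2 hu₀) ?_
  rintro _ ⟨p, hp, q, hq, rfl⟩
  obtain ⟨z, hz, hzpq⟩ :=
    exists_mem_frontier_mem_segment (hs.notMem_of_mem_left hp) (hu hq)
  have hbdd : BddBelow (Set.image2 dist s (frontier t)) :=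
    ⟨0, by rintro _ ⟨_, -, _, -, rfl⟩; exact dist_nonneg⟩
  calc setDist s (frontier t) ≤ dist p z := csInf_le hbdd (Set.mem_image2_of_mem hp hz)
    _ ≤ dist p q := by
      linarith [dist_add_dist_of_mem_segment hzpq, dist_nonneg (x := z) (y := q)]

namespace Cube

theorem clSet_nonempty (Q : Cube n) : Q.clSet.Nonempty :=
  ⟨Q.corner, fun _ => ⟨le_rfl, le_add_of_nonneg_right Q.side_pos.le⟩⟩

theorem setDist_frontier_le_cubeDist {K R : Cube n} (h : Disjoint K.set R.set) :
    setDist K.clSet (frontier R.set) ≤ cubeDist K R := by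
  have hK : Disjoint K.clSet (interior R.set) := by
    rw [← K.closure_set]
    exact (h.mono_right interior_subset).closure_left isOpen_interior
  exact setDist_frontier_le_s5 hK R.closure_set.ge K.clSet_nonempty R.clSet_nonempty

end Cube

theorem IsGood.lt_cubeDist {𝒟 : Set (Cube n)} {r : ℕ} {γ : ℝ} {K R : Cube n}
    (hK : IsGood 𝒟 r γ K) (hR : R ∈ 𝒟) (hside : 2 ^ r * K.side ≤ R.side)
    (h : Disjoint K.set R.set) : K.side ^ γ * R.side ^ (1 - γ) < cubeDist K R :=
  (hK R hR hside).trans_le (Cube.setDist_frontier_le_cubeDist h)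

theorem two_mul_zpow_le_of_lt {a b : ℤ} (h : (2 : ℝ) ^ a < 2 ^ b) :
    2 * (2 : ℝ) ^ a ≤ 2 ^ b := by
  have hab : a + 1 ≤ b := (zpow_lt_zpow_iff_right₀ one_lt_two).mp h
  calc 2 * (2 : ℝ) ^ a = 2 ^ (a + 1) := by rw [zpow_add_one₀ two_ne_zero, mul_comm]
    _ ≤ 2 ^ b := zpow_le_zpow_right₀ one_le_two hab

theorem two_mul_two_pow_mul_side_le {ω : ℤ → Fin n → Bool} {Q R : Cube n} (r : ℕ)
    (hQ : Q ∈ dyadicGrid ω) (hR : R ∈ dyadicGrid ω) (h : 2 ^ r * Q.side < R.side) :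
    2 * (2 ^ r * Q.side) ≤ R.side := by
  obtain ⟨k, -, hk, -⟩ := hQ
  obtain ⟨m, -, hm, -⟩ := hR
  have hpow : (2 : ℝ) ^ r * Q.side = 2 ^ ((r : ℤ) + -k) := by
    rw [hk, zpow_add₀ two_ne_zero, zpow_natCast]
  rw [hpow, hm] at h ⊢
  exact two_mul_zpow_le_of_lt h

theorem diagonal_part_bounded_complexity_general (n : ℕ) (α : ℝ)
    (hα : α ∈ Set.Ioc (0 : ℝ) 1) (r : ℕ)
    (ω : ℤ → Fin n → Bool) (I J K : Cube n)
    (hI : I ∈ dyadicGrid ω) (hJ : J ∈ dyadicGrid ω) (hK : K ∈ dyadicGrid ω)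
    (hgood : IsGood (dyadicGrid ω) r (α / (2 * (2 * (n : ℝ) + α))) K)
    (h2 : I.side = 2 * J.side)
    (h3 : max (cubeDist K I) (cubeDist K J) ≤
      K.side ^ (α / (2 * (2 * (n : ℝ) + α))) *
        J.side ^ (1 - α / (2 * (2 * (n : ℝ) + α))))
    (h4 : K.set ∩ I.set = ∅ ∨ K.set ∩ J.set = ∅) :
    I.side ≤ 2 ^ r * K.side := by
  by_contra! hlt
  set γ := α / (2 * (2 * (n : ℝ) + α))
  rcases h4 with hKI | hKJ
  · have hγ : γ ≤ 1 := by
      have : (0 : ℝ) ≤ n := n.cast_nonneg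
      exact div_le_one_of_le₀ (by linarith [hα.1]) (by linarith [hα.1])
    have hJI : J.side ^ (1 - γ) ≤ I.side ^ (1 - γ) :=
      Real.rpow_le_rpow J.side_pos.le (by linarith [J.side_pos]) (by linarith)
    have := calc cubeDist K I
        _ ≤ K.side ^ γ * J.side ^ (1 - γ) := (le_max_left _ _).trans h3
        _ ≤ K.side ^ γ * I.side ^ (1 - γ) :=
          mul_le_mul_of_nonneg_left hJI (Real.rpow_nonneg K.side_pos.le γ)
        _ < cubeDist K I :=
          hgood.lt_cubeDist hI hlt.le (Set.disjoint_iff_inter_eq_empty.mpr hKI)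
    exact lt_irrefl _ this
  · have hJside : 2 ^ r * K.side ≤ J.side := by
      linarith [two_mul_two_pow_mul_side_le r hK hI hlt]
    have hfar := hgood.lt_cubeDist hJ hJside (Set.disjoint_iff_inter_eq_empty.mpr hKJ)
    linarith [le_max_right (cubeDist K I) (cubeDist K J)]

/-- the diagonal part has bounded complexity: if `K` is a good cube,
`ℓ(K) ≤ ℓ(I) = 2ℓ(J)`, `max(d(K,I), d(K,J)) ≤ ℓ(K)^γ ℓ(J)^(1-γ)` with
`γ = α/(2(2n+α))`, and `K ∩ I = ∅` or `K ∩ J = ∅`, then `ℓ(I) ≤ 2^r ℓ(K)`. -/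
theorem diagonal_part_bounded_complexity (n : ℕ) (hn : 0 < n) (α : ℝ)
    (hα : α ∈ Set.Ioc (0 : ℝ) 1) (r : ℕ) (hr : 1 ≤ r)
    (ω : ℤ → Fin n → Bool) (I J K : Cube n)
    (hI : I ∈ dyadicGrid ω) (hJ : J ∈ dyadicGrid ω) (hK : K ∈ dyadicGrid ω)
    (hgood : IsGood (dyadicGrid ω) r (α / (2 * (2 * (n : ℝ) + α))) K)
    (h1 : K.side ≤ I.side) (h2 : I.side = 2 * J.side)
    (h3 : max (cubeDist K I) (cubeDist K J) ≤
      K.side ^ (α / (2 * (2 * (n : ℝ) + α))) *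
        J.side ^ (1 - α / (2 * (2 * (n : ℝ) + α))))
    (h4 : K.set ∩ I.set = ∅ ∨ K.set ∩ J.set = ∅) :
    I.side ≤ 2 ^ r * K.side :=
  diagonal_part_bounded_complexity_general n α hα r ω I J K hI hJ hK hgood h2 h3 h4

end Bilinear
end
end
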